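/- arXiv:1812.05534 — 2 statements merged into one kernel-verified Lean document; each statement's English description precedes it below -/
import Mathlib

section
/- Every index j ∈ Fin n is reachable from the index 0 by a directed path along the arc relation A (i.e., (0, j) lies in the reflexive-transitive closure of A); equivalently, iterating the parent map j ↦ (the largest i < j with t i ∉ D) from any j reaches 0 after finitely many steps. -/
/-- Every index `j` is reachable from `0` by a directed path along
the request-tree arc relation `A`. -/
theorem stmt_1 {n : ℕ} (hn : 0 < n) {T : Type*} (t : Fin n → T) (D : Set T)
    (h0 : t ⟨0, hn⟩ ∉ D)
    (A : Fin n → Fin n → Prop)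
    (hA : ∀ i j : Fin n, A i j ↔ i < j ∧ t i ∉ D ∧ ∀ k : Fin n, i < k → k < j → t k ∈ D) :
    ∀ j : Fin n, Relation.ReflTransGen A ⟨0, hn⟩ j := by
  have key : ∀ m : ℕ, ∀ j : Fin n, j.val = m → Relation.ReflTransGen A ⟨0, hn⟩ j := by
    intro m
    induction m using Nat.strong_induction_on with
    | _ m ih' =>
    intro j hjm
    have ih : ∀ i : Fin n, i < j → Relation.ReflTransGen A ⟨0, hn⟩ i :=
      fun i hi => ih' i.val (hjm ▸ hi) i rfl
    rcases Nat.eq_zero_or_pos j.val with hj | hj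
    · have : j = ⟨0, hn⟩ := Fin.ext hj
      subst this; exact Relation.ReflTransGen.refl
    · classical
      have hne : (Finset.univ.filter (fun i : Fin n => i < j ∧ t i ∉ D)).Nonempty :=
        ⟨⟨0, hn⟩, by simp only [Finset.mem_filter, Finset.mem_univ, true_and]
                     exact ⟨by simpa [Fin.lt_def] using hj, h0⟩⟩
      obtain ⟨i, hi, hmax⟩ := Finset.exists_max_image _ id hne
      simp only [Finset.mem_filter, Finset.mem_univ, true_and] at hi
      obtain ⟨hij, hiD⟩ := hi
      have hAij : A i j := by
        rw [hA]
        refine ⟨hij, hiD, fun k hik hkj => ?_⟩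
        by_contra hk
        have := hmax k (by simp only [Finset.mem_filter, Finset.mem_univ, true_and]
                           exact ⟨hkj, hk⟩)
        exact absurd (lt_of_le_of_lt this hik) (lt_irrefl _)
      exact (ih i hij).tail hAij
  exact fun j => key j.val j rfl
end

section
/- The simple graph on Fin n whose edges are the unordered pairs {i, j} with A i j is a tree (it is connected and acyclic), and it has exactly n − 1 edges; equivalently, the set of pairs (i, j) with A i j has cardinality n − 1. -/
/-!
Every vertex `j ≠ 0` has exactly one `A`-parent, namely the last index before `j` whose type is not
duplicated, and the parent lies strictly before `j`. Following parents therefore reaches `0` from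
every vertex, so the graph is connected, and sending an arc to its head is a bijection onto the
`n - 1` non-root vertices. A connected graph on `n` vertices with `n - 1` edges is a tree.
-/

open SimpleGraph

section ParentRelation

variable {V : Type*} {R : V → V → Prop}

lemma ncard_setOf_rel_eq_ncard_setOf_exists (huniq : ∀ i i' j, R i j → R i' j → i = i') :
    {p : V × V | R p.1 p.2}.ncard = {j | ∃ i, R i j}.ncard := by
  have hinj : Set.InjOn Prod.snd {p : V × V | R p.1 p.2} := by
    rintro ⟨i, j⟩ hij ⟨i', j'⟩ hij' (rfl : j = j')
    rw [huniq i i' j hij hij']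
  rw [← hinj.ncard_image]
  congr 1
  ext j
  simp

lemma ncard_setOf_rel_eq_card_sub_one [Finite V] {r : V}
    (huniq : ∀ i i' j, R i j → R i' j → i = i') (hpar : ∀ j, (∃ i, R i j) ↔ j ≠ r) :
    {p : V × V | R p.1 p.2}.ncard = Nat.card V - 1 := by
  have hroot : {j | ∃ i, R i j} = {r}ᶜ := Set.ext hpar
  rw [ncard_setOf_rel_eq_ncard_setOf_exists huniq, hroot, Set.ncard_compl, Set.ncard_singleton]

variable [LinearOrder V]

lemma ncard_edgeSet_fromRel_of_lt (hR : ∀ i j, R i j → i < j) :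
    (fromRel R).edgeSet.ncard = {p : V × V | R p.1 p.2}.ncard := by
  have hedges : (fromRel R).edgeSet = (fun p : V × V ↦ s(p.1, p.2)) '' {p | R p.1 p.2} := by
    ext e
    induction e using Sym2.ind with
    | _ x y =>
      simp only [mem_edgeSet, fromRel_adj, Set.mem_image, Set.mem_ofPred_eq, Prod.exists,
        Sym2.eq_iff]
      constructor
      · rintro ⟨-, h | h⟩
        exacts [⟨x, y, h, .inl ⟨rfl, rfl⟩⟩, ⟨y, x, h, .inr ⟨rfl, rfl⟩⟩]
      · rintro ⟨a, b, hab, ⟨rfl, rfl⟩ | ⟨rfl, rfl⟩⟩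
        exacts [⟨(hR _ _ hab).ne, .inl hab⟩, ⟨(hR _ _ hab).ne', .inr hab⟩]
  have hinj : Set.InjOn (fun p : V × V ↦ s(p.1, p.2)) {p | R p.1 p.2} := by
    rintro ⟨a, b⟩ hab ⟨c, d⟩ hcd h
    rcases Sym2.eq_iff.mp h with ⟨rfl, rfl⟩ | ⟨rfl, rfl⟩
    · rfl
    · exact absurd (hR _ _ hab) (hR _ _ hcd).not_gt
  rw [hedges, hinj.ncard_image]

lemma reachable_fromRel_of_parent [WellFoundedLT V] {r : V} (hR : ∀ i j, R i j → i < j)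
    (hpar : ∀ j, j ≠ r → ∃ i, R i j) (v : V) : (fromRel R).Reachable v r := by
  induction v using WellFoundedLT.induction with
  | _ j ih =>
    by_cases hj : j = r
    · exact hj ▸ Reachable.refl j
    · obtain ⟨i, hij⟩ := hpar j hj
      have hadj : (fromRel R).Adj j i := (fromRel_adj R j i).mpr ⟨(hR i j hij).ne', .inr hij⟩
      exact hadj.reachable.trans (ih i (hR i j hij))

lemma isTree_fromRel_of_parent [Finite V] {r : V} (hR : ∀ i j, R i j → i < j)
    (huniq : ∀ i i' j, R i j → R i' j → i = i') (hpar : ∀ j, (∃ i, R i j) ↔ j ≠ r) :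
    (fromRel R).IsTree := by
  have hconn : (fromRel R).Connected := (connected_iff_exists_forall_reachable _).mpr
    ⟨r, fun v ↦ (reachable_fromRel_of_parent hR (fun j ↦ (hpar j).mpr) v).symm⟩
  have hcard : Nat.card V - 1 + 1 = Nat.card V :=
    Nat.sub_add_cancel (Nat.card_pos_iff.mpr ⟨⟨r⟩, inferInstance⟩)
  rw [isTree_iff_connected_and_card, Nat.card_coe_set_eq, ncard_edgeSet_fromRel_of_lt hR,
    ncard_setOf_rel_eq_card_sub_one huniq hpar]
  exact ⟨hconn, hcard⟩

end ParentRelation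

section RequestArc

variable {ι T : Type*} [LinearOrder ι] (t : ι → T) (D : Set T)

def requestArc (i j : ι) : Prop :=
  i < j ∧ t i ∉ D ∧ ∀ k, i < k → k < j → t k ∈ D

variable {t D}

lemma requestArc.lt {i j : ι} (h : requestArc t D i j) : i < j := h.1

lemma requestArc.unique {i i' j : ι} (h : requestArc t D i j) (h' : requestArc t D i' j) :
    i = i' := by
  by_contra hne
  rcases lt_or_gt_of_ne hne with hlt | hlt
  · exact h'.2.1 (h.2.2 i' hlt h'.1)
  · exact h.2.1 (h'.2.2 i hlt h.1)

lemma exists_requestArc_of_lt [LocallyFiniteOrderBot ι] {i₀ j : ι} (hlt : i₀ < j)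
    (hi₀ : t i₀ ∉ D) : ∃ i, requestArc t D i j := by
  classical
  set S := (Finset.Iio j).filter (fun i ↦ t i ∉ D)
  have hS : S.Nonempty := ⟨i₀, by simp [S, hlt, hi₀]⟩
  have hmax : S.max' hS ∈ S := S.max'_mem hS
  simp only [S, Finset.mem_filter, Finset.mem_Iio] at hmax
  refine ⟨S.max' hS, hmax.1, hmax.2, fun k hk hkj ↦ ?_⟩
  by_contra hkD
  exact (S.le_max' k (by simp [S, hkj, hkD])).not_gt hk

end RequestArc

/-- The simple graph on `Fin n` whose edges are the unordered pairs
`{i, j}` with `A i j` is a tree, and it has exactly `n - 1` edges; equivalently,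
the set of pairs `(i, j)` with `A i j` has cardinality `n - 1`. -/
theorem stmt_2 {n : ℕ} (hn : 0 < n) {T : Type*} (t : Fin n → T) (D : Set T)
    (h0 : t ⟨0, hn⟩ ∉ D)
    (A : Fin n → Fin n → Prop)
    (hA : ∀ i j : Fin n, A i j ↔ i < j ∧ t i ∉ D ∧ ∀ k : Fin n, i < k → k < j → t k ∈ D) :
    (SimpleGraph.fromRel A).IsTree ∧
    (SimpleGraph.fromRel A).edgeSet.ncard = n - 1 ∧
    {p : Fin n × Fin n | A p.1 p.2}.ncard = n - 1 := by
  obtain rfl : A = requestArc t D := funext₂ fun i j ↦ propext (hA i j)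
  have hlt : ∀ i j, requestArc t D i j → i < j := fun _ _ ↦ requestArc.lt
  have huniq : ∀ i i' j, requestArc t D i j → requestArc t D i' j → i = i' :=
    fun _ _ _ ↦ requestArc.unique
  have hpar : ∀ j, (∃ i, requestArc t D i j) ↔ j ≠ ⟨0, hn⟩ := by
    refine fun j ↦ ⟨fun ⟨i, hij⟩ hj ↦ ?_, fun hj ↦ exists_requestArc_of_lt ?_ h0⟩
    · subst hj
      exact Nat.not_lt_zero i hij.lt
    · exact Fin.lt_def.mpr (Nat.pos_of_ne_zero fun h ↦ hj (Fin.ext h))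
  have hpairs := ncard_setOf_rel_eq_card_sub_one huniq hpar
  rw [Nat.card_fin] at hpairs
  refine ⟨isTree_fromRel_of_parent hlt huniq hpar, ?_, hpairs⟩
  rw [ncard_edgeSet_fromRel_of_lt hlt, hpairs]
end
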